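/- Refinement of hyper conditionals implies refinement of tests: let s : A → D(Fin n) and t : A → D(Fin m) be tests, and suppose ω ∈ D(A) satisfies ω(a) ≠ 0 for all a ∈ A and s_*(ω)(i) ≠ 0 for all i ∈ Fin n. If ω‖s ⊑ ω‖t in the hyper-refinement order, then s ⊑ t, i.e., there exists h : Fin n → D(Fin m) with h_*(s(a)) = t(a) for all a ∈ A. -/

import Mathlib

/-!
On its support, a witness `Ω` of `ω‖s ⊑ ω‖t` consists of hyper distributions concentrated on
the graph `i ↦ (i, ω_i)` of the posteriors of `ω‖s`, so all it records is a joint law `σ` of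
the inner outcome `i` and the outer label `j`. The first marginal of `σ` is `s_*(ω)`, and
mixing the posteriors `ω_i` along `σ(·, j)` gives back the `j`-part of `gr(t)_*(ω)`. Taking for
`h(i)` the conditional of `σ` given `i`, these two facts give
`ω(a) · h_*(s(a))(j) = ω(a) · t(a)(j)`, and `ω(a) ≠ 0` cancels.
-/

open scoped ENNReal

noncomputable section

namespace HyperNorm

variable {A B : Type*} {n m : ℕ}

/-- `ω[i] = Σ_a ω(i,a)`. -/
def fmass (ω : PMF (Fin n × A)) (i : Fin n) : ℝ≥0∞ := ∑' a, ω (i, a)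

lemma tsum_fmass (ω : PMF (Fin n × A)) : ∑' i, fmass ω i = 1 := by
  simp only [fmass]
  rw [← ENNReal.tsum_prod']
  exact ω.tsum_coe

lemma fmass_ne_top (ω : PMF (Fin n × A)) (i : Fin n) : fmass ω i ≠ ⊤ := by
  apply ne_top_of_le_ne_top ENNReal.one_ne_top
  rw [← tsum_fmass ω]
  exact ENNReal.le_tsum i

/-- The first marginal `i ↦ ω[i]` as a distribution. -/
def fstM (ω : PMF (Fin n × A)) : PMF (Fin n) :=
  ⟨fun i => fmass ω i, ENNReal.summable.hasSum_iff.mpr (tsum_fmass ω)⟩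

/-- The normalised `i`-th component `ω_i(a) = ω(i,a)/ω[i]` (junk value if `ω[i] = 0`,
which never contributes to `hnorm` below since it is weighted by `ω[i] = 0`). -/
def ncond (ω : PMF (Fin n × A)) (i : Fin n) : PMF A :=
  if h : fmass ω i ≠ 0 then
    ⟨fun a => ω (i, a) / fmass ω i,
      ENNReal.summable.hasSum_iff.mpr (by
        simp only [div_eq_mul_inv]
        rw [ENNReal.tsum_mul_right, ← div_eq_mul_inv]
        exact ENNReal.div_self h (fmass_ne_top ω i))⟩
  else PMF.pure (ω.support_nonempty.some.2)

/-- Hyper normalisation `N(ω) = Σ_{i with ω[i] ≠ 0} ω[i]·η(i, ω_i)`. -/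
def hnorm (ω : PMF (Fin n × A)) : PMF (Fin n × PMF A) :=
  (fstM ω).bind fun i => PMF.pure (i, ncond ω i)

/-- Graph map `gr(f)(x)(y,x') = f(x)(y) if x' = x, else 0`. -/
def gr {X Y : Type*} (f : X → PMF Y) : X → PMF (Y × X) :=
  fun x => (f x).map fun y => (y, x)


lemma _root_.PMF.bind_congr_of_mem_support {α β : Type*} {p : PMF α} {f g : α → PMF β}
    (h : ∀ a ∈ p.support, f a = g a) : p.bind f = p.bind g := by
  ext b
  refine tsum_congr fun a => ?_
  by_cases ha : p a = 0
  · simp [ha]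
  · rw [h a ha]

lemma _root_.PMF.map_prodMk_apply {X Y : Type*} [DecidableEq X] (p : PMF Y) (x x' : X) (y : Y) :
    (p.map (Prod.mk x)) (x', y) = if x' = x then p y else 0 := by
  rw [PMF.map_apply, tsum_eq_single y fun y' hy' => by simp [Ne.symm hy']]
  by_cases hx : x' = x <;> simp [hx]

lemma _root_.PMF.bind_map_prodMk_apply {X Y Z : Type*} (ρ : PMF (X × Y)) (f : X → PMF Z)
    (y : Y) (z : Z) :
    (ρ.bind fun xy => (f xy.1).map (Prod.mk xy.2)) (y, z) = ∑' x, ρ (x, y) * f x z := by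
  classical
  rw [PMF.bind_apply, ENNReal.tsum_prod']
  refine tsum_congr fun x => ?_
  rw [tsum_eq_single y fun y' hy' => by simp [Ne.symm hy']]
  rw [PMF.map_prodMk_apply, if_pos rfl]

lemma ncond_apply_of_fmass_ne_zero {ν : PMF (Fin n × A)} {i : Fin n} (h : fmass ν i ≠ 0)
    (a : A) :
    ncond ν i a = ν (i, a) / fmass ν i := by
  rw [show ncond ν i = _ from dif_pos h]
  rfl

lemma fmass_mul_ncond (ν : PMF (Fin n × A)) (i : Fin n) (a : A) :
    fmass ν i * ncond ν i a = ν (i, a) := by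
  by_cases h : fmass ν i = 0
  · rw [h, zero_mul, eq_comm, ← nonpos_iff_eq_zero, ← h]
    exact ENNReal.le_tsum a
  · rw [ncond_apply_of_fmass_ne_zero h]
    exact ENNReal.mul_div_cancel h (fmass_ne_top ν i)

lemma bind_gr_apply (ω : PMF A) (s : A → PMF B) (b : B) (a : A) :
    (ω.bind (gr s)) (b, a) = ω a * s a b := by
  classical
  rw [PMF.bind_apply, tsum_eq_single a fun a' ha' => by simp [gr, PMF.map_apply, Ne.symm ha']]
  simp only [gr, PMF.map_apply, Prod.mk.injEq, and_true]
  rw [tsum_eq_single b fun b' hb' => by simp [Ne.symm hb']]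
  simp

lemma map_fst_eq_fstM (ν : PMF (Fin n × A)) : ν.map Prod.fst = fstM ν := by
  ext i
  rw [PMF.map_apply, ENNReal.tsum_prod', tsum_eq_single i fun i' hi' => by simp [Ne.symm hi']]
  exact tsum_congr fun a => if_pos rfl

lemma hnorm_eq_map (ν : PMF (Fin n × A)) :
    hnorm ν = (fstM ν).map fun i => (i, ncond ν i) := rfl

lemma map_fst_hnorm (ν : PMF (Fin n × A)) : (hnorm ν).map Prod.fst = fstM ν := by
  rw [hnorm_eq_map, PMF.map_comp]
  exact PMF.map_id _

lemma snd_eq_ncond_of_mem_support_hnorm {ν : PMF (Fin n × A)} {q : Fin n × PMF A}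
    (hq : q ∈ (hnorm ν).support) : q.2 = ncond ν q.1 := by
  rw [hnorm_eq_map, PMF.mem_support_map_iff] at hq
  obtain ⟨i, -, rfl⟩ := hq
  rfl

lemma bind_hnorm_eq_self (ν : PMF (Fin n × A)) :
    (hnorm ν).bind (fun q => q.2.map (Prod.mk q.1)) = ν := by
  ext ⟨i, a⟩
  rw [hnorm_eq_map, PMF.bind_map, PMF.bind_apply,
    tsum_eq_single i fun i' hi' => by simp [Function.comp, hi'.symm]]
  simp only [Function.comp, PMF.map_prodMk_apply]
  exact fmass_mul_ncond ν i a

lemma bind_snd_eq_bind_fst {X Y : Type*} {Φ : PMF (X × PMF Y)} {c : X → PMF Y}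
    (h : ∀ q ∈ Φ.support, q.2 = c q.1) :
    (Φ.map Prod.snd).bind id = (Φ.map Prod.fst).bind c := by
  rw [PMF.bind_map, PMF.bind_map]
  exact PMF.bind_congr_of_mem_support h

def labelCoupling (Ω : PMF (Fin m × PMF (Fin n × PMF A))) : PMF (Fin n × Fin m) :=
  Ω.bind fun p => (p.2.map Prod.fst).map fun i => (i, p.1)

section labelCoupling

variable {Ω : PMF (Fin m × PMF (Fin n × PMF A))} {ν : PMF (Fin n × A)}

lemma fstM_labelCoupling (hΩ : (Ω.map Prod.snd).bind id = hnorm ν) :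
    fstM (labelCoupling Ω) = fstM ν := by
  rw [← map_fst_eq_fstM, ← map_fst_hnorm, ← hΩ, labelCoupling, PMF.map_bind, PMF.map_bind,
    PMF.bind_map]
  refine congrArg _ (funext fun p => ?_)
  rw [PMF.map_comp]
  exact PMF.map_id _

lemma bind_labelCoupling_ncond (hΩ : (Ω.map Prod.snd).bind id = hnorm ν) :
    (labelCoupling Ω).bind (fun ij => (ncond ν ij.1).map (Prod.mk ij.2)) =
      (Ω.map fun p => (p.1, (p.2.map Prod.snd).bind id)).bind
        fun q => q.2.map (Prod.mk q.1) := by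
  rw [labelCoupling, PMF.bind_bind, PMF.bind_map]
  refine PMF.bind_congr_of_mem_support fun p hp => ?_
  have hinner : ∀ q ∈ p.2.support, q.2 = ncond ν q.1 := fun q hq =>
    snd_eq_ncond_of_mem_support_hnorm <| hΩ ▸ (PMF.mem_support_bind_iff _ _ _).2
      ⟨p.2, (PMF.mem_support_map_iff _ _ _).2 ⟨p, hp, rfl⟩, hq⟩
  simp only [Function.comp, PMF.bind_map, bind_snd_eq_bind_fst hinner, PMF.map_bind]
  rfl

end labelCoupling

theorem bind_ncond_eq_of_balance {s : A → PMF (Fin n)} {t : A → PMF (Fin m)} {ω : PMF A}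
    (hω : ∀ a, ω a ≠ 0) {σ : PMF (Fin n × Fin m)} (hfst : fstM σ = fstM (ω.bind (gr s)))
    (hbal : σ.bind (fun ij => (ncond (ω.bind (gr s)) ij.1).map (Prod.mk ij.2)) = ω.bind (gr t))
    (a : A) : (s a).bind (ncond σ) = t a := by
  set ν := ω.bind (gr s)
  ext j
  refine (ENNReal.mul_right_inj (hω a) (ω.apply_ne_top a)).1 ?_
  calc ω a * (s a).bind (ncond σ) j = ∑' i, ν (i, a) * ncond σ i j := by
        rw [PMF.bind_apply, ← ENNReal.tsum_mul_left]
        exact tsum_congr fun i => by rw [bind_gr_apply, mul_assoc]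
    _ = ∑' i, fmass σ i * ncond σ i j * ncond ν i a := by
        refine tsum_congr fun i => ?_
        have : fmass σ i = fmass ν i := congrArg (· i) hfst
        rw [← fmass_mul_ncond ν, this]
        ring
    _ = ∑' i, σ (i, j) * ncond ν i a := by simp only [fmass_mul_ncond]
    _ = ω a * t a j := by rw [← PMF.bind_map_prodMk_apply, hbal, bind_gr_apply]

theorem hyper_refinement_implies_test_refinement_general
    (s : A → PMF (Fin n)) (t : A → PMF (Fin m)) (ω : PMF A)
    (hω : ∀ a, ω a ≠ 0)
    (href : ∃ Ω : PMF (Fin m × PMF (Fin n × PMF A)),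
      (Ω.map Prod.snd).bind id = hnorm (ω.bind (gr s)) ∧
      Ω.map (fun p => (p.1, (p.2.map Prod.snd).bind id)) = hnorm (ω.bind (gr t))) :
    ∃ h : Fin n → PMF (Fin m), ∀ a, (s a).bind h = t a := by
  obtain ⟨Ω, hΦ, hΨ⟩ := href
  refine ⟨ncond (labelCoupling Ω), bind_ncond_eq_of_balance hω (fstM_labelCoupling hΦ) ?_⟩
  rw [bind_labelCoupling_ncond hΦ, hΨ, bind_hnorm_eq_self]

/-- refinement of hyper conditionals implies refinement of tests:
if `ω` has full support, `s_*(ω)` has full support, and `ω‖s ⊑ ω‖t` in the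
hyper-refinement order, then `s ⊑ t`. -/
theorem hyper_refinement_implies_test_refinement
    (s : A → PMF (Fin n)) (t : A → PMF (Fin m)) (ω : PMF A)
    (hω : ∀ a, ω a ≠ 0) (hs : ∀ i, (ω.bind s) i ≠ 0)
    (href : ∃ Ω : PMF (Fin m × PMF (Fin n × PMF A)),
      (Ω.map Prod.snd).bind id = hnorm (ω.bind (gr s)) ∧
      Ω.map (fun p => (p.1, (p.2.map Prod.snd).bind id)) = hnorm (ω.bind (gr t))) :
    ∃ h : Fin n → PMF (Fin m), ∀ a, (s a).bind h = t a :=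
  hyper_refinement_implies_test_refinement_general s t ω hω href

end HyperNorm
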